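/- Let G be a finite abelian group of order n, D(G) its generalized dihedral group (assumed non-abelian), \Gamma the commuting graph of D(G), and z = |{g \in G : g^2 = e}| with z \ge 2. For every integer i with 2n - n/z - 1 \le i \le 2n - 2, the number s_i of resolving sets of \Gamma of cardinality i equals z^{2n-i} · C(n/z + 1, 2n - i) + (n - z) · z^{2n-i-1} · C(n/z + 1, 2n - i - 1), where C(a, b) denotes a binomial coefficient. -/

import Mathlib

/-- The generalized dihedral group `D(G) = G ⋊ C₂`, with `⟨g, false⟩`
representing `(g, 1)` and `⟨g, true⟩` representing `(g, -1)`.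
Multiplication is `(g₁, c₁)(g₂, c₂) = (g₁ g₂^{c₁}, c₁ c₂)`, i.e. `-1` acts by inversion. -/
@[ext]
structure GenDihedral (G : Type) where
  g : G
  b : Bool
  deriving DecidableEq

namespace GenDihedral

variable {G : Type} [CommGroup G]

instance : Mul (GenDihedral G) :=
  ⟨fun a c => ⟨a.g * (if a.b then c.g⁻¹ else c.g), xor a.b c.b⟩⟩

instance : One (GenDihedral G) := ⟨⟨1, false⟩⟩

instance : Inv (GenDihedral G) := ⟨fun a => ⟨if a.b then a.g else a.g⁻¹, a.b⟩⟩

theorem mul_def (a c : GenDihedral G) :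
    a * c = ⟨a.g * (if a.b then c.g⁻¹ else c.g), xor a.b c.b⟩ := rfl

theorem one_def : (1 : GenDihedral G) = ⟨1, false⟩ := rfl

theorem inv_def (a : GenDihedral G) : a⁻¹ = ⟨if a.b then a.g else a.g⁻¹, a.b⟩ := rfl

instance : Group (GenDihedral G) where
  mul_assoc a c d := by
    obtain ⟨g₁, b₁⟩ := a; obtain ⟨g₂, b₂⟩ := c; obtain ⟨g₃, b₃⟩ := d
    cases b₁ <;> cases b₂ <;> cases b₃ <;>
      simp [mul_def, mul_assoc, mul_comm, mul_left_comm, mul_inv, inv_inv]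
  one_mul a := by obtain ⟨g, b⟩ := a; cases b <;> simp [mul_def, one_def]
  mul_one a := by obtain ⟨g, b⟩ := a; cases b <;> simp [mul_def, one_def]
  inv_mul_cancel a := by
    obtain ⟨g, b⟩ := a; cases b <;> simp [mul_def, one_def, inv_def]

instance [Fintype G] : Fintype (GenDihedral G) :=
  Fintype.ofEquiv (G × Bool)
    ⟨fun p => ⟨p.1, p.2⟩, fun x => (x.g, x.b), fun _ => rfl, fun _ => rfl⟩

instance [DecidableEq G] (a c : GenDihedral G) : Decidable (Commute a c) :=
  decidable_of_iff (a * c = c * a) Iff.rfl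

end GenDihedral

namespace GenDihedral

/-- The commuting graph of `D(G)`: vertices are the elements of `D(G)`, and two
distinct vertices are adjacent iff they commute. -/
def commGraph (G : Type) [CommGroup G] : SimpleGraph (GenDihedral G) where
  Adj u v := u ≠ v ∧ u * v = v * u
  symm := ⟨fun _ _ h => ⟨h.1.symm, h.2.symm⟩⟩
  loopless := ⟨fun _ h => h.1 rfl⟩

instance {G : Type} [CommGroup G] [DecidableEq G] : DecidableRel (commGraph G).Adj :=
  fun _ _ => instDecidableAnd

end GenDihedral

/-- `W` is a resolving set of `Γ` if every pair of distinct vertices is distinguished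
by its vector of graph distances to the vertices of `W`. -/
def IsResolvingSet {V : Type} (Γ : SimpleGraph V) (W : Set V) : Prop :=
  ∀ u v : V, u ≠ v → ∃ w ∈ W, Γ.dist u w ≠ Γ.dist v w

/-- The metric dimension of `Γ`: the minimum cardinality of a resolving set. -/
noncomputable def metricDim {V : Type} (Γ : SimpleGraph V) : ℕ :=
  sInf {k : ℕ | ∃ W : Finset V, IsResolvingSet Γ ↑W ∧ W.card = k}

/-- The number `sᵢ` of resolving sets of `Γ` of cardinality `i` (the coefficient of `xⁱ`
in the resolving polynomial `β(Γ, x) = Σᵢ sᵢ xⁱ`). -/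
noncomputable def numResolvingSets {V : Type} (Γ : SimpleGraph V) (i : ℕ) : ℕ :=
  Set.ncard {W : Finset V | IsResolvingSet Γ ↑W ∧ W.card = i}


/-!
In the commuting graph of `D(G)` the identity is adjacent to every other vertex, so distances are
`0`, `1` or `2`, and a vertex `w ∉ {u, v}` separates `u` from `v` exactly when it commutes with one
of them but not the other. Hence elements with the same centralizer ("twins") can only be
separated by themselves, and a resolving set must contain all but at most one element of each twin
class. Conversely, every element `(g, c)` has the twin `(g t, c)` for an involution `t ≠ e`, so such
a set meets every twin class and therefore separates any two non-twins. Resolving sets of size `i`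
are thus the complements of `(2n - i)`-element sets meeting each twin class at most once. The twin
classes are the `z` central rotations, the `n - z` other rotations, and, for each of the `n / z`
squares `s`, the `z` reflections `(g, -1)` with `g² = s`.
-/

open Finset

namespace SimpleGraph

variable {V : Type} {Γ : SimpleGraph V} {x₀ u v w : V}

lemma reachable_of_forall_adj (hx₀ : ∀ v ≠ x₀, Γ.Adj v x₀) (u v : V) : Γ.Reachable u v := by
  have h (u : V) : Γ.Reachable u x₀ := by
    by_cases hu : u = x₀
    · exact hu ▸ Reachable.refl u
    · exact (hx₀ u hu).reachable
  exact (h u).trans (h v).symm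

lemma dist_eq_two_of_forall_adj (hx₀ : ∀ v ≠ x₀, Γ.Adj v x₀) (huv : u ≠ v) (h : ¬Γ.Adj u v) :
    Γ.dist u v = 2 := by
  have hu : u ≠ x₀ := by rintro rfl; exact h (hx₀ v huv.symm).symm
  have hv : v ≠ x₀ := by rintro rfl; exact h (hx₀ u huv)
  have h2 : Γ.dist u v ≤ 2 := dist_le (.cons (hx₀ u hu) (.cons (hx₀ v hv).symm .nil))
  have h0 : Γ.dist u v ≠ 0 := fun h0 =>
    huv ((reachable_of_forall_adj hx₀ u v).dist_eq_zero_iff.1 h0)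
  have h1 : Γ.dist u v ≠ 1 := fun h1 => h (dist_eq_one_iff_adj.1 h1)
  omega

lemma dist_eq_dist_iff_of_forall_adj (hx₀ : ∀ v ≠ x₀, Γ.Adj v x₀) (hu : u ≠ w) (hv : v ≠ w) :
    Γ.dist u w = Γ.dist v w ↔ (Γ.Adj u w ↔ Γ.Adj v w) := by
  by_cases hau : Γ.Adj u w <;> by_cases hav : Γ.Adj v w <;>
    simp [hau, hav, dist_eq_one_iff_adj.2, dist_eq_two_of_forall_adj hx₀, hu, hv]

theorem isResolvingSet_iff_injOn_compl {K : Type} {f : V → K} (hx₀ : ∀ v ≠ x₀, Γ.Adj v x₀)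
    (hf : ∀ u v, f u = f v ↔ ∀ w, (u = w ∨ Γ.Adj u w) ↔ (v = w ∨ Γ.Adj v w))
    (htwin : ∀ u, ∃ v ≠ u, f v = f u) (W : Set V) :
    IsResolvingSet Γ W ↔ Set.InjOn f Wᶜ := by
  constructor
  · intro hW u hu v hv huv
    by_contra hne
    obtain ⟨w, hwW, hw⟩ := hW u v hne
    have hwu : u ≠ w := fun h => hu (h ▸ hwW)
    have hwv : v ≠ w := fun h => hv (h ▸ hwW)
    refine hw ((dist_eq_dist_iff_of_forall_adj hx₀ hwu hwv).2 ?_)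
    simpa [hwu, hwv] using (hf u v).1 huv w
  · intro hinj u v huv
    have hpos : ∀ {a b : V}, a ≠ b → Γ.dist a b ≠ 0 := fun hab h0 =>
      hab ((reachable_of_forall_adj hx₀ _ _).dist_eq_zero_iff.1 h0)
    by_cases hu : u ∈ W
    · exact ⟨u, hu, by rw [dist_self]; exact (hpos huv.symm).symm⟩
    by_cases hv : v ∈ W
    · exact ⟨v, hv, by rw [dist_self]; exact hpos huv⟩
    obtain ⟨x, hx⟩ : ∃ x, ¬((u = x ∨ Γ.Adj u x) ↔ (v = x ∨ Γ.Adj v x)) := by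
      by_contra! h
      exact huv (hinj hu hv ((hf u v).2 h))
    obtain ⟨w, hwW, hwx⟩ : ∃ w ∈ W, f w = f x := by
      obtain ⟨x', hx'x, hfx'⟩ := htwin x
      by_contra! h
      exact hx'x (hinj (fun h' => h x' h' hfx') (fun h' => h x h' rfl) hfx')
    have hne (y : V) (hy : y ∉ W) : y ≠ w := fun h => hy (h ▸ hwW)
    -- `w` has the closed neighbourhood of `x`, so it is adjacent to exactly one of `u`, `v`.
    have hadj (y : V) (hy : y ∉ W) : Γ.Adj y w ↔ (y = x ∨ Γ.Adj y x) := by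
      simpa [(hne y hy).symm, eq_comm, adj_comm] using (hf w x).1 hwx y
    refine ⟨w, hwW, fun hd => hx ?_⟩
    rwa [dist_eq_dist_iff_of_forall_adj hx₀ (hne u hu) (hne v hv), hadj u hu, hadj v hv] at hd

end SimpleGraph

section Counting

variable {V K : Type} [Fintype V] [DecidableEq V] [DecidableEq K]

theorem numResolvingSets_eq_card_filter_injOn {Γ : SimpleGraph V} {f : V → K}
    (hf : ∀ W : Set V, IsResolvingSet Γ W ↔ Set.InjOn f Wᶜ) {i : ℕ} (hi : i ≤ Fintype.card V) :
    numResolvingSets Γ i = #{F : Finset V | #F = Fintype.card V - i ∧ Set.InjOn f F} := by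
  have hset : {W : Finset V | IsResolvingSet Γ ↑W ∧ #W = i} =
      compl '' ↑({F : Finset V | #F = Fintype.card V - i ∧ Set.InjOn f F} : Finset (Finset V)) := by
    ext W
    rw [Set.image_eq_preimage_of_inverse compl_compl compl_compl]
    simp only [Set.mem_preimage, mem_coe, mem_filter, mem_univ, true_and, card_compl, coe_compl]
    have := card_le_univ W
    rw [Set.mem_ofPred, hf, and_comm]
    exact and_congr_left fun _ => by omega
  rw [numResolvingSets, hset, Set.ncard_image_of_injective _ compl_injective, Set.ncard_coe_finset]

theorem card_filter_injOn_and_image_eq (f : V → K) (S : Finset K) :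
    #{F : Finset V | Set.InjOn f F ∧ F.image f = S} = ∏ s ∈ S, #{v | f v = s} := by
  rw [← card_pi]
  symm
  refine card_bij (fun σ _ => S.attach.image fun s => σ s.1 s.2) ?_ ?_ ?_
  · intro σ hσ
    have hfσ (s : K) (hs : s ∈ S) : f (σ s hs) = s := by simpa using mem_pi.1 hσ s hs
    simp only [mem_filter, mem_univ, true_and]
    constructor
    · simp only [coe_image, coe_attach, Set.image_univ]
      rintro _ ⟨⟨s, hs⟩, rfl⟩ _ ⟨⟨s', hs'⟩, rfl⟩ h
      simp only [hfσ] at h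
      subst h
      rfl
    · ext s
      simp [hfσ]
  · intro σ₁ hσ₁ σ₂ hσ₂ h
    have hfσ₁ (s : K) (hs : s ∈ S) : f (σ₁ s hs) = s := by simpa using mem_pi.1 hσ₁ s hs
    have hfσ₂ (s : K) (hs : s ∈ S) : f (σ₂ s hs) = s := by simpa using mem_pi.1 hσ₂ s hs
    funext s hs
    have hmem : σ₁ s hs ∈ S.attach.image fun s => σ₂ s.1 s.2 :=
      h ▸ mem_image_of_mem _ (mem_attach _ ⟨s, hs⟩)
    obtain ⟨⟨s', hs'⟩, -, he⟩ := mem_image.1 hmem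
    obtain rfl : s' = s := by rw [← hfσ₂ s' hs', he, hfσ₁]
    exact he.symm
  · intro F hF
    simp only [mem_filter, mem_univ, true_and] at hF
    obtain ⟨hinj, rfl⟩ := hF
    choose σ hσF hσf using fun s (hs : s ∈ F.image f) => mem_image.1 hs
    refine ⟨σ, mem_pi.2 fun s hs => by simp [hσf], ?_⟩
    ext v
    rw [mem_image]
    constructor
    · rintro ⟨⟨s, hs⟩, -, rfl⟩
      exact hσF s hs
    · intro hv
      exact ⟨⟨f v, mem_image_of_mem f hv⟩, mem_attach _ _, hinj (hσF _ _) hv (hσf _ _)⟩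

theorem card_filter_card_eq_and_injOn (f : V → K) (k : ℕ) :
    #{F : Finset V | #F = k ∧ Set.InjOn f F} =
      ∑ S ∈ (univ.image f).powersetCard k, ∏ s ∈ S, #{v | f v = s} := by
  rw [card_eq_sum_card_fiberwise (f := fun F => F.image f) (t := (univ.image f).powersetCard k)]
  · refine sum_congr rfl fun S hS => ?_
    rw [← card_filter_injOn_and_image_eq, filter_filter]
    refine congrArg card (filter_congr fun F _ => ?_)
    constructor
    · rintro ⟨⟨-, hinj⟩, him⟩
      exact ⟨hinj, him⟩
    · rintro ⟨hinj, rfl⟩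
      exact ⟨⟨by rw [← card_image_of_injOn hinj, (mem_powersetCard.1 hS).2], hinj⟩, rfl⟩
  · intro F hF
    simp only [mem_coe, mem_filter, mem_univ, true_and] at hF
    rw [mem_coe, mem_powersetCard, card_image_of_injOn hF.2, hF.1]
    exact ⟨image_subset_image (subset_univ F), rfl⟩

end Counting

section PowersetCard

variable {K R : Type} [CommSemiring R]

theorem sum_powersetCard_prod_of_forall_eq {T : Finset K} {w : K → R} {z : R}
    (hw : ∀ s ∈ T, w s = z) (k : ℕ) :
    ∑ S ∈ T.powersetCard k, ∏ s ∈ S, w s = T.card.choose k * z ^ k := by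
  rw [sum_congr rfl fun S hS => ?_, sum_const, card_powersetCard, nsmul_eq_mul]
  rw [mem_powersetCard] at hS
  rw [prod_congr rfl fun s hs => hw s (hS.1 hs), prod_const, hS.2]

theorem sum_powersetCard_succ_insert_prod [DecidableEq K] {a : K} {T : Finset K} (ha : a ∉ T)
    {w : K → R} {z : R} (hw : ∀ s ∈ T, w s = z) (k : ℕ) :
    ∑ S ∈ (insert a T).powersetCard (k + 1), ∏ s ∈ S, w s =
      T.card.choose (k + 1) * z ^ (k + 1) + w a * (T.card.choose k * z ^ k) := by
  have hinsert : Set.InjOn (insert a : Finset K → Finset K) (T.powersetCard k) := by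
    intro S hS S' hS' h
    have ha' (S : Finset K) (hS : S ∈ T.powersetCard k) : a ∉ S :=
      fun h => ha ((mem_powersetCard.1 hS).1 h)
    rw [← erase_insert (ha' S hS), ← erase_insert (ha' S' hS'), h]
  have hdisj : Disjoint (T.powersetCard (k + 1)) ((T.powersetCard k).image (insert a)) := by
    refine disjoint_left.2 fun S hS hS' => ?_
    obtain ⟨S', -, rfl⟩ := mem_image.1 hS'
    exact ha ((mem_powersetCard.1 hS).1 (mem_insert_self a S'))
  rw [powersetCard_succ_insert ha, sum_union hdisj, sum_image hinsert,
    sum_powersetCard_prod_of_forall_eq hw (k + 1), ← sum_powersetCard_prod_of_forall_eq hw k,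
    mul_sum]
  refine congrArg _ (sum_congr rfl fun S hS => prod_insert fun h => ?_)
  exact ha ((mem_powersetCard.1 hS).1 h)

end PowersetCard

section Powers

variable {G : Type} [CommGroup G] [Fintype G] [DecidableEq G] (m : ℕ)

lemma card_filter_pow_eq_of_mem_image {s : G} (hs : s ∈ univ.image fun g : G => g ^ m) :
    #{g : G | g ^ m = s} = #{g : G | g ^ m = 1} :=
  MonoidHom.card_fiber_eq_of_mem_range (powMonoidHom m) (by simpa using hs) ⟨1, one_pow m⟩

lemma card_image_pow_mul_card_filter_pow_eq_one :
    #(univ.image fun g : G => g ^ m) * #{g : G | g ^ m = 1} = Fintype.card G := by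
  rw [← card_univ, card_eq_sum_card_image (fun g : G => g ^ m) univ,
    sum_congr rfl fun s hs => card_filter_pow_eq_of_mem_image m hs, sum_const, smul_eq_mul]

end Powers

namespace GenDihedral

lemma card_eq_two_mul {G : Type} [Fintype G] :
    Fintype.card (GenDihedral G) = 2 * Fintype.card G := by
  rw [Fintype.card_congr (⟨fun x => (x.g, x.b), fun p => ⟨p.1, p.2⟩, fun _ => rfl, fun _ => rfl⟩ :
    GenDihedral G ≃ G × Bool), Fintype.card_prod, Fintype.card_bool, mul_comm]

lemma card_filter_b_eq_and {G : Type} [Fintype G] (b : Bool) (p : G → Prop) [DecidablePred p] :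
    #{u : GenDihedral G | u.b = b ∧ p u.g} = #{g | p g} :=
  card_nbij' GenDihedral.g (fun g => ⟨g, b⟩) (fun u hu => by simp_all) (fun g hg => by simp_all)
    (fun u hu => by ext <;> simp_all) (fun g hg => rfl)

variable {G : Type} [CommGroup G]

@[simp] lemma commute_mk_false_mk_false (a b : G) :
    Commute (⟨a, false⟩ : GenDihedral G) ⟨b, false⟩ := by
  simp [commute_iff_eq, mul_def, mul_comm]

@[simp] lemma commute_mk_false_mk_true (a b : G) :
    Commute (⟨a, false⟩ : GenDihedral G) ⟨b, true⟩ ↔ a ^ 2 = 1 := by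
  simp only [commute_iff_eq, mul_def, mk.injEq]
  simp [mul_comm a b, pow_two, mul_eq_one_iff_eq_inv]

@[simp] lemma commute_mk_true_mk_true (a b : G) :
    Commute (⟨a, true⟩ : GenDihedral G) ⟨b, true⟩ ↔ a ^ 2 = b ^ 2 := by
  simp [commute_iff_eq, mul_def, ← div_eq_mul_inv, div_eq_div_iff_mul_eq_mul, pow_two]

@[simp] lemma commute_mk_true_mk_false (a b : G) :
    Commute (⟨a, true⟩ : GenDihedral G) ⟨b, false⟩ ↔ b ^ 2 = 1 :=
  Commute.symm_iff.trans (commute_mk_false_mk_true b a)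

lemma eq_or_commGraph_adj_iff {u w : GenDihedral G} :
    u = w ∨ (commGraph G).Adj u w ↔ Commute u w := by
  by_cases h : u = w
  · simp [h]
  · simp [commGraph, h, commute_iff_eq]

lemma commGraph_adj_one {u : GenDihedral G} (hu : u ≠ 1) : (commGraph G).Adj u 1 :=
  ⟨hu, by rw [mul_one, one_mul]⟩

variable [DecidableEq G]

def twinClass : GenDihedral G → Bool ⊕ G
  | ⟨g, false⟩ => .inl (decide (g ^ 2 = 1))
  | ⟨g, true⟩ => .inr (g ^ 2)

theorem twinClass_eq_iff {c : G} (hc : c ^ 2 ≠ 1) {u v : GenDihedral G} :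
    twinClass u = twinClass v ↔ ∀ w, Commute u w ↔ Commute v w := by
  refine ⟨fun h w => ?_, fun h => ?_⟩
  · obtain ⟨a, _ | _⟩ := u <;> obtain ⟨b, _ | _⟩ := v <;> obtain ⟨d, _ | _⟩ := w <;>
      simp_all [twinClass]
  · obtain ⟨a, _ | _⟩ := u <;> obtain ⟨b, _ | _⟩ := v
    · simpa [twinClass] using h ⟨1, true⟩
    · simpa [twinClass, hc] using h ⟨c, false⟩
    · simpa [twinClass, hc] using h ⟨c, false⟩
    · simpa [twinClass] using h ⟨b, true⟩

lemma exists_ne_twinClass_eq {t : G} (ht : t ^ 2 = 1) (ht1 : t ≠ 1) (u : GenDihedral G) :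
    ∃ v ≠ u, twinClass v = twinClass u := by
  refine ⟨⟨u.g * t, u.b⟩, fun h => ht1 ?_, ?_⟩
  · simpa using congrArg GenDihedral.g h
  · obtain ⟨g, _ | _⟩ := u <;> simp [twinClass, mul_pow, ht]

theorem isResolvingSet_commGraph_iff {c t : G} (hc : c ^ 2 ≠ 1) (ht : t ^ 2 = 1) (ht1 : t ≠ 1)
    (W : Set (GenDihedral G)) : IsResolvingSet (commGraph G) W ↔ Set.InjOn twinClass Wᶜ :=
  SimpleGraph.isResolvingSet_iff_injOn_compl (fun _ => commGraph_adj_one)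
    (fun _ _ => by simp only [eq_or_commGraph_adj_iff]; exact twinClass_eq_iff hc)
    (exists_ne_twinClass_eq ht ht1) W

variable [Fintype G]

lemma card_twinClass_eq_inl_true :
    #{u : GenDihedral G | twinClass u = .inl true} = #{g : G | g ^ 2 = 1} := by
  rw [← card_filter_b_eq_and (G := G) false]
  refine congrArg card (filter_congr fun u _ => ?_)
  obtain ⟨g, _ | _⟩ := u <;> simp [twinClass]

lemma card_twinClass_eq_inl_false :
    #{u : GenDihedral G | twinClass u = .inl false} = Fintype.card G - #{g : G | g ^ 2 = 1} := by
  have hsplit := card_filter_add_card_filter_not (s := (univ : Finset G)) (fun g => g ^ 2 = 1)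
  rw [card_univ] at hsplit
  rw [← hsplit, Nat.add_sub_cancel_left, ← card_filter_b_eq_and (G := G) false]
  refine congrArg card (filter_congr fun u _ => ?_)
  obtain ⟨g, _ | _⟩ := u <;> simp [twinClass]

lemma card_twinClass_eq_inr (s : G) :
    #{u : GenDihedral G | twinClass u = .inr s} = #{g : G | g ^ 2 = s} := by
  rw [← card_filter_b_eq_and (G := G) true]
  refine congrArg card (filter_congr fun u _ => ?_)
  obtain ⟨g, _ | _⟩ := u <;> simp [twinClass]

lemma card_twinClass_eq_of_mem {s : Bool ⊕ G}
    (hs : s ∈ insert (.inl true) ((univ.image fun g : G => g ^ 2).map .inr)) :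
    #{u : GenDihedral G | twinClass u = s} = #{g : G | g ^ 2 = 1} := by
  obtain rfl | hs := mem_insert.1 hs
  · exact card_twinClass_eq_inl_true
  · obtain ⟨s', hs', rfl⟩ := mem_map.1 hs
    exact (card_twinClass_eq_inr s').trans (card_filter_pow_eq_of_mem_image 2 hs')

lemma image_twinClass {c : G} (hc : c ^ 2 ≠ 1) :
    univ.image (twinClass (G := G)) =
      insert (.inl false) (insert (.inl true) ((univ.image fun g : G => g ^ 2).map .inr)) := by
  ext (β | s) <;> simp only [mem_image, mem_univ, true_and, mem_insert, mem_map,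
    Function.Embedding.inr_apply, Sum.inl.injEq, Sum.inr.injEq, reduceCtorEq, false_or,
    exists_eq_right]
  · refine iff_of_true ⟨⟨if β then 1 else c, false⟩, ?_⟩ (by cases β <;> simp)
    cases β <;> simp [twinClass, hc]
  · constructor
    · rintro ⟨⟨g, _ | _⟩, h⟩ <;> simp only [twinClass, reduceCtorEq, Sum.inr.injEq] at h
      exact ⟨g, h⟩
    · rintro ⟨g, rfl⟩
      exact ⟨⟨g, true⟩, rfl⟩

end GenDihedral

open GenDihedral in
theorem stmt18_general {G : Type} [CommGroup G] [Fintype G] [DecidableEq G]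
    (hna : ∃ g : G, g ^ 2 ≠ 1) (n z : ℕ) (hn : n = Fintype.card G)
    (hz : z = (Finset.univ.filter fun g : G => g ^ 2 = 1).card) (hz2 : 2 ≤ z)
    (i : ℕ) (hi2 : i ≤ 2 * n - 2) :
    numResolvingSets (commGraph G) i =
      z ^ (2 * n - i) * Nat.choose (n / z + 1) (2 * n - i) +
        (n - z) * z ^ (2 * n - i - 1) * Nat.choose (n / z + 1) (2 * n - i - 1) := by
  obtain ⟨c, hc⟩ := hna
  obtain ⟨t, ht, ht1⟩ : ∃ t : G, t ^ 2 = 1 ∧ t ≠ 1 := by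
    obtain ⟨t, ht, ht1⟩ := exists_mem_ne (hz ▸ hz2 : 1 < #{g : G | g ^ 2 = 1}) 1
    exact ⟨t, (mem_filter.1 ht).2, ht1⟩
  set T : Finset (Bool ⊕ G) := insert (.inl true) ((univ.image fun g : G => g ^ 2).map .inr)
  have hsquares : #(univ.image fun g : G => g ^ 2) * z = n :=
    hz ▸ hn ▸ card_image_pow_mul_card_filter_pow_eq_one 2
  have hT : #T = n / z + 1 := by
    rw [card_insert_of_notMem (by simp), card_map, ← hsquares, Nat.mul_div_cancel _ (by omega)]
  have hzn : z ≤ n := hz ▸ hn ▸ card_le_univ _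
  obtain ⟨k, hk⟩ : ∃ k, 2 * n - i = k + 1 := ⟨2 * n - i - 1, by omega⟩
  rw [numResolvingSets_eq_card_filter_injOn (isResolvingSet_commGraph_iff hc ht ht1)
      (by rw [card_eq_two_mul]; omega),
    card_eq_two_mul, ← hn, hk, card_filter_card_eq_and_injOn, image_twinClass hc,
    sum_powersetCard_succ_insert_prod (by simp) fun s hs => hz ▸ card_twinClass_eq_of_mem hs,
    hT, card_twinClass_eq_inl_false, ← hn, ← hz, Nat.add_sub_cancel]
  push_cast
  ring

open GenDihedral in
/-- If `z = |{g : g² = e}| ≥ 2`, then for every `i` with `2n - n/z - 1 ≤ i ≤ 2n - 2`,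
the number `sᵢ` of resolving sets of cardinality `i` of the commuting graph of a
non-abelian `D(G)` equals
`z^{2n-i} · C(n/z + 1, 2n - i) + (n - z) · z^{2n-i-1} · C(n/z + 1, 2n - i - 1)`. -/
theorem stmt18 {G : Type} [CommGroup G] [Fintype G] [DecidableEq G]
    (hna : ∃ g : G, g ^ 2 ≠ 1) (n z : ℕ) (hn : n = Fintype.card G)
    (hz : z = (Finset.univ.filter fun g : G => g ^ 2 = 1).card) (hz2 : 2 ≤ z)
    (i : ℕ) (hi1 : 2 * n - n / z - 1 ≤ i) (hi2 : i ≤ 2 * n - 2) :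
    numResolvingSets (commGraph G) i =
      z ^ (2 * n - i) * Nat.choose (n / z + 1) (2 * n - i) +
        (n - z) * z ^ (2 * n - i - 1) * Nat.choose (n / z + 1) (2 * n - i - 1) :=
  stmt18_general hna n z hn hz hz2 i hi2
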